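/- arXiv:1306.6199 — 6 statements merged into one kernel-verified Lean document; each statement's English description precedes it below -/
import Mathlib

section
/- Let φ : ℝ → ℝ be continuously differentiable and increasing, and suppose there exist constants c, C, R > 0 such that c|x| ≤ |φ(x)| ≤ C|x| whenever |x| ≥ R. Then for every z ∈ ℂ the function t ↦ log*|1 − z/t| · φ'(t) is Lebesgue integrable on ℝ; in particular the potential ω_{φ'}(z) = ∫_ℝ log*|1 − z/t| φ'(t) dt is a well-defined (absolutely convergent) integral for every z ∈ ℂ. -/
/-!
Near `t = 0` and `t = z` the function `log*|1 - z/t|` has only logarithmic singularities, so it is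
locally integrable, and `φ'` is continuous. For large `|t|` the correction `Re z / t` cancels the
linear term of `log (1 + w) = w + O(|w|²)` with `w = -z/t`, so `|log*|1 - z/t|| ≤ |z|²/t²`, and
`∫ φ'(t)/t² dt` converges on the tails because `φ` grows at most linearly. The reflection
`t ↦ -t` (together with `z ↦ -z` and `φ ↦ -φ(-·)`) reduces the negative half-line to the positive one.
-/

open MeasureTheory Complex

/-- The modified logarithm `log*|1 - z/t|`. -/
noncomputable def logStar (z : ℂ) (t : ℝ) : ℝ :=
  if 1 < |t| then Real.log (‖(1 - z / (t : ℂ))‖) + z.re / t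
  else Real.log (‖(1 - z / (t : ℂ))‖)

open Set Filter Topology

lemma logStar_neg (z : ℂ) (t : ℝ) : logStar z (-t) = logStar (-z) t := by
  simp only [logStar, abs_neg, ofReal_neg, div_neg, sub_neg_eq_add, neg_div, neg_re]

lemma measurable_logStar (z : ℂ) : Measurable (logStar z) :=
  Measurable.ite (measurableSet_lt measurable_const measurable_abs) (by fun_prop) (by fun_prop)

lemma abs_logStar_le (z : ℂ) (t : ℝ) :
    |logStar z t| ≤ |Real.log ‖1 - z / (t : ℂ)‖| + |z.re| := by
  unfold logStar
  split_ifs with ht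
  · have : |z.re / t| ≤ |z.re| := by
      rw [abs_div]
      exact div_le_self (abs_nonneg _) ht.le
    exact (abs_add_le _ _).trans (by gcongr)
  · exact le_add_of_nonneg_right (abs_nonneg _)

lemma intervalIntegrable_logStar (z : ℂ) (a b : ℝ) :
    IntervalIntegrable (logStar z) volume a b := by
  have hmer : MeromorphicOn (fun t : ℝ => 1 - z / (t : ℂ)) (uIcc a b) := fun x _ =>
    (MeromorphicAt.const 1 x).sub
      ((MeromorphicAt.const z x).div (ofRealCLM.analyticAt x).meromorphicAt)
  refine (hmer.intervalIntegrable_log_norm.norm.add (intervalIntegrable_const (c := |z.re|))).mono_fun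
    (measurable_logStar z).aestronglyMeasurable (ae_of_all _ fun t => ?_)
  have hnonneg : 0 ≤ |Real.log ‖1 - z / (t : ℂ)‖| + |z.re| := by positivity
  simpa only [Real.norm_eq_abs, abs_of_nonneg hnonneg] using abs_logStar_le z t

lemma abs_logStar_le_sq {z : ℂ} {t : ℝ} (ht : 1 < |t|) (hz : 2 * ‖z‖ ≤ |t|) :
    |logStar z t| ≤ ‖z‖ ^ 2 / t ^ 2 := by
  set w : ℂ := -(z / t)
  have hw : ‖w‖ = ‖z‖ / |t| := by simp [w]
  have hw_half : ‖w‖ ≤ 1 / 2 := by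
    rw [hw, div_le_iff₀ (by linarith)]
    linarith
  have hlog : logStar z t = (log (1 + w) - w).re := by
    simp [logStar, if_pos ht, w, log_re, ← sub_eq_add_neg]
  calc |logStar z t| ≤ ‖log (1 + w) - w‖ := hlog ▸ abs_re_le_norm _
    _ ≤ ‖w‖ ^ 2 * (1 - ‖w‖)⁻¹ / 2 := norm_log_one_add_sub_self_le (by linarith)
    _ ≤ ‖w‖ ^ 2 := by
      have : (1 - ‖w‖)⁻¹ ≤ 2 := by
        rw [inv_le_comm₀ (by linarith) two_pos]
        linarith
      nlinarith [sq_nonneg ‖w‖]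
    _ = ‖z‖ ^ 2 / t ^ 2 := by rw [hw, div_pow, sq_abs]

lemma integrableOn_Ioi_deriv_div_sq {ψ : ℝ → ℝ} (hψ : Differentiable ℝ ψ) (hmono : Monotone ψ)
    {C T : ℝ} (hT : 0 < T) (hbound : ∀ t, T ≤ t → |ψ t| ≤ C * t) :
    IntegrableOn (fun t => deriv ψ t / t ^ 2) (Ioi T) := by
  -- `ψ'/t²` is dominated by the nonnegative derivative `G'` of `ψ/t² - 2C/t`, which tends to `0`.
  set G' : ℝ → ℝ := fun t => deriv ψ t / t ^ 2 + 2 * (C * t - ψ t) / t ^ 3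
  have hG : ∀ t ∈ Ici T, HasDerivAt (fun t => ψ t / t ^ 2 - 2 * C * t⁻¹) (G' t) t := by
    intro t ht
    have ht0 : t ≠ 0 := (hT.trans_le ht).ne'
    refine (((hψ t).hasDerivAt.div (hasDerivAt_pow 2 t) (pow_ne_zero 2 ht0)).sub
      ((hasDerivAt_inv ht0).const_mul (2 * C))).congr_deriv ?_
    simp only [G']
    field_simp
    ring
  have hG'_nonneg : ∀ t ∈ Ioi T, 0 ≤ G' t := fun t ht => by
    have ht0 : 0 < t := hT.trans ht
    have := hmono.deriv_nonneg (x := t)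
    have : 0 ≤ C * t - ψ t := by linarith [le_abs_self (ψ t), hbound t ht.le]
    positivity
  have hG_lim : Tendsto (fun t => ψ t / t ^ 2 - 2 * C * t⁻¹) atTop (𝓝 0) := by
    have hψ_lim : Tendsto (fun t => ψ t / t ^ 2) atTop (𝓝 0) := by
      refine squeeze_zero_norm' ?_
        (tendsto_const_nhds.div_atTop tendsto_id : Tendsto (fun t : ℝ => C / t) atTop (𝓝 0))
      filter_upwards [eventually_ge_atTop T] with t ht
      have ht0 : 0 < t := hT.trans_le ht
      rw [norm_div, norm_pow, Real.norm_eq_abs, Real.norm_eq_abs, abs_of_pos ht0,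
        div_le_iff₀ (by positivity)]
      calc |ψ t| ≤ C * t := hbound t ht
        _ = C / t * t ^ 2 := by field_simp
    simpa using hψ_lim.sub (tendsto_inv_atTop_zero.const_mul (2 * C))
  refine (integrableOn_Ioi_deriv_of_nonneg' hG hG'_nonneg hG_lim).mono'
    ((measurable_deriv ψ).div (by fun_prop)).aestronglyMeasurable
    ((ae_restrict_iff' measurableSet_Ioi).2 (ae_of_all _ fun t ht => ?_))
  have ht0 : 0 < t := hT.trans ht
  have : ψ t ≤ C * t := (le_abs_self _).trans (hbound t ht.le)
  rw [Real.norm_eq_abs, abs_of_nonneg (div_nonneg hmono.deriv_nonneg (sq_nonneg t))]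
  exact le_add_of_nonneg_right (div_nonneg (by linarith) (by positivity))

lemma integrableOn_Ioi_zero_logStar_mul_deriv {ψ : ℝ → ℝ} (hψ : ContDiff ℝ 1 ψ)
    (hmono : Monotone ψ) {C R : ℝ} (hbound : ∀ t, R ≤ t → |ψ t| ≤ C * |t|) (z : ℂ) :
    IntegrableOn (fun t => logStar z t * deriv ψ t) (Ioi 0) := by
  set T := max (max R 1) (2 * ‖z‖)
  have hRT : R ≤ T := (le_max_left _ _).trans (le_max_left _ _)
  have h1T : 1 ≤ T := (le_max_right _ _).trans (le_max_left _ _)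
  have hzT : 2 * ‖z‖ ≤ T := le_max_right _ _
  have hnear : IntegrableOn (fun t => logStar z t * deriv ψ t) (Ioc 0 T) := by
    have hlog : IntegrableOn (logStar z) (Icc 0 T) :=
      (integrableOn_Icc_iff_integrableOn_Ioc).2 (intervalIntegrable_logStar z 0 T).1
    exact (hlog.mul_continuousOn (hψ.continuous_deriv le_rfl).continuousOn
      isCompact_Icc).mono_set Ioc_subset_Icc_self
  have htail : IntegrableOn (fun t => deriv ψ t / t ^ 2) (Ioi T) :=
    integrableOn_Ioi_deriv_div_sq (hψ.differentiable one_ne_zero) hmono (by positivity)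
      fun t ht => by simpa [abs_of_pos (by linarith : 0 < t)] using hbound t (hRT.trans ht)
  have hfar : IntegrableOn (fun t => logStar z t * deriv ψ t) (Ioi T) := by
    refine (htail.const_mul (‖z‖ ^ 2)).mono'
      ((measurable_logStar z).mul (measurable_deriv ψ)).aestronglyMeasurable
      ((ae_restrict_iff' measurableSet_Ioi).2 (ae_of_all _ fun t ht => ?_))
    have ht : T < |t| := ht.out.trans_le (le_abs_self t)
    calc ‖logStar z t * deriv ψ t‖ = |logStar z t| * deriv ψ t := by
          rw [Real.norm_eq_abs, abs_mul, abs_of_nonneg hmono.deriv_nonneg]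
      _ ≤ ‖z‖ ^ 2 / t ^ 2 * deriv ψ t :=
          mul_le_mul_of_nonneg_right (abs_logStar_le_sq (by linarith) (by linarith))
            hmono.deriv_nonneg
      _ = ‖z‖ ^ 2 * (deriv ψ t / t ^ 2) := by ring
  rw [← Ioc_union_Ioi_eq_Ioi (by linarith : (0 : ℝ) ≤ T)]
  exact hnear.union hfar

theorem stmt_0_general (φ : ℝ → ℝ) (hφ : ContDiff ℝ 1 φ) (hmono : StrictMono φ)
    (c C R : ℝ)
    (hbound : ∀ x : ℝ, R ≤ |x| → c * |x| ≤ |φ x| ∧ |φ x| ≤ C * |x|) :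
    ∀ z : ℂ, Integrable (fun t : ℝ => logStar z t * deriv φ t) := by
  intro z
  have hright := integrableOn_Ioi_zero_logStar_mul_deriv hφ hmono.monotone
    (fun t ht => (hbound t (ht.trans (le_abs_self t))).2) z
  have hleft := integrableOn_Ioi_zero_logStar_mul_deriv (ψ := fun s => -φ (-s))
    (hφ.comp contDiff_neg).neg (fun a b hab => neg_le_neg (hmono.monotone (neg_le_neg hab)))
    (fun t ht => by simpa using (hbound (-t) (by simpa using ht.trans (le_abs_self t))).2) (-z)
  have hleft' : IntegrableOn (fun t => logStar z t * deriv φ t) (Iio 0) := by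
    simpa [logStar_neg, deriv_comp_neg] using hleft.comp_neg
  rw [← integrableOn_univ, ← Iio_union_Ici (a := (0 : ℝ)), integrableOn_union,
    integrableOn_Ici_iff_integrableOn_Ioi]
  exact ⟨hleft', hright⟩

theorem stmt_0 (φ : ℝ → ℝ) (hφ : ContDiff ℝ 1 φ) (hmono : StrictMono φ)
    (c C R : ℝ) (hc : 0 < c) (hC : 0 < C) (hR : 0 < R)
    (hbound : ∀ x : ℝ, R ≤ |x| → c * |x| ≤ |φ x| ∧ |φ x| ≤ C * |x|) :
    ∀ z : ℂ, Integrable (fun t : ℝ => logStar z t * deriv φ t) :=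
  stmt_0_general φ hφ hmono c C R hbound
end

section
/- Let γ : ℝ → ℝ be positive and continuous and let φ(x) = ∫₀^x γ(t) dt be bi-Lipschitz for distances larger than N with constants C₁, C₂ > 0. Let B > 0, let a be a real number with 2C₂N < a < B, and let x₁ < x₂ be real numbers with φ(x₂) − φ(x₁) = a. Then the centroid ξ = (1/a) ∫_{x₁}^{x₂} t γ(t) dt satisfies x₁ + C₁N²/B ≤ ξ < x₂. -/
open MeasureTheory intervalIntegral

theorem stmt_4 (γ : ℝ → ℝ) (hγpos : ∀ t, 0 < γ t) (hγcont : Continuous γ)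
    (φ : ℝ → ℝ) (hφ : ∀ x, φ x = ∫ t in (0:ℝ)..x, γ t)
    (N C₁ C₂ : ℝ) (hN : 0 < N) (hC₁ : 0 < C₁) (hC₂ : 0 < C₂)
    (hbl : ∀ x₁ x₂ : ℝ, N ≤ x₂ - x₁ →
      C₁ * (x₂ - x₁) ≤ φ x₂ - φ x₁ ∧ φ x₂ - φ x₁ ≤ C₂ * (x₂ - x₁))
    (B a : ℝ) (hB : 0 < B) (ha₁ : 2 * C₂ * N < a) (ha₂ : a < B)
    (x₁ x₂ : ℝ) (hx : x₁ < x₂) (hφa : φ x₂ - φ x₁ = a)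
    (ξ : ℝ) (hξ : ξ = (1 / a) * ∫ t in x₁..x₂, t * γ t) :
    x₁ + C₁ * N ^ 2 / B ≤ ξ ∧ ξ < x₂ := by
  have ha0 : 0 < a := lt_trans (by positivity) ha₁
  have hintγ : ∀ u v : ℝ, IntervalIntegrable γ volume u v :=
    fun u v => hγcont.intervalIntegrable u v
  have hint1 : ∀ u v : ℝ, IntervalIntegrable (fun t => t * γ t) volume u v :=
    fun u v => (continuous_id.mul hγcont).intervalIntegrable u v
  have hint2 : ∀ u v : ℝ, IntervalIntegrable (fun t => (t - x₁) * γ t) volume u v :=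
    fun u v => ((continuous_id.sub continuous_const).mul hγcont).intervalIntegrable u v
  have hφdiff : ∀ u v : ℝ, φ v - φ u = ∫ t in u..v, γ t := by
    intro u v
    rw [hφ, hφ, intervalIntegral.integral_interval_sub_left (hintγ 0 v) (hintγ 0 u)]
  have hC₂N : C₂ * N < a := by nlinarith
  -- x₁ + N < x₂
  have hx2 : x₁ + N < x₂ := by
    by_contra h
    push_neg at h
    have h1 : φ (x₁ + N) - φ x₁ ≤ C₂ * N := by
      have := (hbl x₁ (x₁ + N) (by linarith)).2
      simpa using this
    have h2 : φ x₂ - φ x₁ ≤ φ (x₁ + N) - φ x₁ := by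
      have : φ (x₁ + N) - φ x₂ = ∫ t in x₂..(x₁ + N), γ t := hφdiff x₂ (x₁ + N)
      have hnn : 0 ≤ ∫ t in x₂..(x₁ + N), γ t :=
        intervalIntegral.integral_nonneg h (fun t _ => (hγpos t).le)
      linarith
    linarith [hφa ▸ (le_trans h2 h1), hC₂N]
  -- decompose the centroid integral
  have hsplit : (∫ t in x₁..x₂, t * γ t) =
      x₁ * a + ∫ t in x₁..x₂, (t - x₁) * γ t := by
    have : (∫ t in x₁..x₂, (t - x₁) * γ t)
        = (∫ t in x₁..x₂, t * γ t) - x₁ * ∫ t in x₁..x₂, γ t := by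
      rw [← intervalIntegral.integral_const_mul,
        ← intervalIntegral.integral_sub (hint1 x₁ x₂)
          ((hintγ x₁ x₂).const_mul x₁)]
      congr 1 with t
      ring
    have ha' : (∫ t in x₁..x₂, γ t) = a := by rw [← hφdiff, hφa]
    rw [this, ha']; ring
  -- lower bound on ∫ (t - x₁) γ
  have hIdecomp : (∫ t in x₁..x₂, (t - x₁) * γ t)
      = (∫ t in x₁..(x₁ + N), (t - x₁) * γ t) + ∫ t in (x₁ + N)..x₂, (t - x₁) * γ t :=
    (intervalIntegral.integral_add_adjacent_intervals (hint2 x₁ (x₁ + N))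
      (hint2 (x₁ + N) x₂)).symm
  have hI1 : 0 ≤ ∫ t in x₁..(x₁ + N), (t - x₁) * γ t :=
    intervalIntegral.integral_nonneg (by linarith)
      (fun t ht => mul_nonneg (by linarith [ht.1]) (hγpos t).le)
  have hI2 : N * (a - C₂ * N) ≤ ∫ t in (x₁ + N)..x₂, (t - x₁) * γ t := by
    have hmono : (∫ t in (x₁ + N)..x₂, N * γ t) ≤ ∫ t in (x₁ + N)..x₂, (t - x₁) * γ t := by
      apply intervalIntegral.integral_mono_on hx2.le
        ((hintγ (x₁+N) x₂).const_mul N) (hint2 (x₁ + N) x₂)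
      intro t ht
      exact mul_le_mul_of_nonneg_right (by linarith [ht.1]) (hγpos t).le
    have heq : (∫ t in (x₁ + N)..x₂, N * γ t) = N * (φ x₂ - φ (x₁ + N)) := by
      rw [intervalIntegral.integral_const_mul, ← hφdiff]
    have hub : φ (x₁ + N) - φ x₁ ≤ C₂ * N := by
      have := (hbl x₁ (x₁ + N) (by linarith)).2
      simpa using this
    have : N * (a - C₂ * N) ≤ N * (φ x₂ - φ (x₁ + N)) := by
      apply mul_le_mul_of_nonneg_left _ hN.le
      linarith
    linarith [heq ▸ this, hmono]
  have hIlb : N * (a - C₂ * N) ≤ ∫ t in x₁..x₂, (t - x₁) * γ t := by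
    rw [hIdecomp]; linarith
  constructor
  · -- lower bound
    have hξ' : ξ = x₁ + (1 / a) * ∫ t in x₁..x₂, (t - x₁) * γ t := by
      rw [hξ, hsplit]; field_simp
    have h1 : N / 2 ≤ (1 / a) * ∫ t in x₁..x₂, (t - x₁) * γ t := by
      rw [one_div, inv_mul_eq_div, le_div_iff₀ ha0]
      nlinarith [hIlb, hN, hC₂N]
    have h2 : C₁ * N ^ 2 / B ≤ N / 2 := by
      rw [div_le_div_iff₀ hB (by norm_num)]
      have hC₁₂ : C₁ ≤ C₂ := by
        have := hbl 0 N (by simpa using le_refl N)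
        nlinarith [this.1, this.2]
      nlinarith
    linarith [hξ' ▸ (le_refl ξ)]
  · -- upper bound
    have hpos : 0 < ∫ t in x₁..x₂, (x₂ - t) * γ t := by
      apply intervalIntegral.intervalIntegral_pos_of_pos_on
        ((by fun_prop : Continuous fun t => (x₂ - t) * γ t).intervalIntegrable x₁ x₂)
        _ hx
      intro t ht
      exact mul_pos (by linarith [ht.2]) (hγpos t)
    have hrw : (∫ t in x₁..x₂, (x₂ - t) * γ t)
        = x₂ * a - ∫ t in x₁..x₂, t * γ t := by
      have : (∫ t in x₁..x₂, (x₂ - t) * γ t)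
          = x₂ * (∫ t in x₁..x₂, γ t) - ∫ t in x₁..x₂, t * γ t := by
        rw [← intervalIntegral.integral_const_mul,
          ← intervalIntegral.integral_sub ((hintγ x₁ x₂).const_mul x₂) (hint1 x₁ x₂)]
        congr 1 with t
        ring
      rw [this, ← hφdiff, hφa]
    have : (∫ t in x₁..x₂, t * γ t) < x₂ * a := by linarith [hrw ▸ hpos]
    rw [hξ]
    rw [one_div, inv_mul_eq_div, div_lt_iff₀ ha0]
    linarith
end

section
/- Let φ : ℝ → ℝ be nondecreasing, continuous, and bi-Lipschitz for distances larger than N with constants C₁, C₂ > 0, and define θ(x) = ∫_{x−N}^{x+N} (φ(t) − φ(x))/(t − x) dt (the integrand extends continuously to t = x). Then there exists a constant C > 0 such that for every x ∈ ℝ, | ∫_ℝ (φ(t) − φ(x)) / ((t − x)((t − x)² + 1)) dt − θ(x) | ≤ C. -/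
/-!
Translating to `x = 0`, the difference of the two integrals is the integral of the first
integrand over `|s| > N` plus the integral of the difference of the two integrands over
`[-N, N]`. Monotonicity and the upper Lipschitz bound give `|φ (x + s) - φ x| ≤ C₂ max(N, |s|)`,
so the first integrand is at most `C₂ / (1 + s²)` for `|s| ≥ N`, with integral at most `C₂ π`,
while on `[-N, N]` the two integrands differ by `(φ (x + s) - φ x) s / (s² + 1)`, which is at
most `C₂ N²`. When `(φ (x + s) - φ x) / s` is not integrable near `0`, neither integral exists
and Lean gives both the junk value `0`.
-/

open MeasureTheory intervalIntegral Set Real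

namespace Monotone

variable {φ : ℝ → ℝ} {N C : ℝ}

theorem sub_le_mul_max (hφ : Monotone φ) (hC : ∀ a b, N ≤ b - a → φ b - φ a ≤ C * (b - a))
    (a b : ℝ) : φ b - φ a ≤ C * max N (b - a) := by
  have hfar := hC a (a + max N (b - a)) (by simp)
  have hb : φ b ≤ φ (a + max N (b - a)) := hφ (by linarith [le_max_right N (b - a)])
  rw [add_sub_cancel_left] at hfar
  linarith

theorem abs_sub_le_mul_max (hφ : Monotone φ)
    (hC : ∀ a b, N ≤ b - a → φ b - φ a ≤ C * (b - a)) (x t : ℝ) :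
    |φ t - φ x| ≤ C * max N |t - x| := by
  rcases le_total x t with h | h
  · rw [abs_of_nonneg (sub_nonneg.2 (hφ h)), abs_of_nonneg (sub_nonneg.2 h)]
    exact hφ.sub_le_mul_max hC _ _
  · rw [abs_sub_comm, abs_of_nonneg (sub_nonneg.2 (hφ h)), abs_sub_comm,
      abs_of_nonneg (sub_nonneg.2 h)]
    exact hφ.sub_le_mul_max hC _ _

end Monotone

theorem le_abs_of_notMem_Ioc {N s : ℝ} (hs : s ∉ Ioc (-N) N) : N ≤ |s| := by
  rw [mem_Ioc, not_and_or, not_lt, not_le] at hs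
  rcases hs with hs | hs
  · exact le_abs.2 (Or.inr (by linarith))
  · exact le_abs.2 (Or.inl hs.le)

theorem integrableOn_div_mul_sq_add_one_iff {u : ℝ → ℝ} {K : Set ℝ} (hK : IsCompact K) :
    IntegrableOn (fun s ↦ u s / (s * (s ^ 2 + 1))) K ↔ IntegrableOn (fun s ↦ u s / s) K := by
  have hfg : ∀ s, u s / (s * (s ^ 2 + 1)) = u s / s * (s ^ 2 + 1)⁻¹ := fun s ↦ by
    rw [div_mul_eq_div_div, div_eq_mul_inv]
  have hgf : ∀ s, u s / s = u s / (s * (s ^ 2 + 1)) * (s ^ 2 + 1) := fun s ↦ by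
    rw [hfg, inv_mul_cancel_right₀ (by positivity)]
  have hw : Continuous fun s : ℝ ↦ (s ^ 2 + 1)⁻¹ :=
    (by fun_prop : Continuous fun s : ℝ ↦ s ^ 2 + 1).inv₀ fun s ↦ by positivity
  constructor
  · intro h
    exact (h.mul_continuousOn (g' := fun s ↦ s ^ 2 + 1) (by fun_prop) hK).congr_fun
      (fun s _ ↦ (hgf s).symm) hK.measurableSet
  · intro h
    exact (h.mul_continuousOn hw.continuousOn hK).congr_fun (fun s _ ↦ (hfg s).symm)
      hK.measurableSet

section GrowthBound

variable {u : ℝ → ℝ} {N C : ℝ}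

theorem nonneg_of_abs_le_mul_max (hN : 0 < N) (hu : ∀ s, |u s| ≤ C * max N |s|) : 0 ≤ C := by
  have h0 := (abs_nonneg _).trans (hu 0)
  rw [abs_zero, max_eq_left hN.le] at h0
  exact nonneg_of_mul_nonneg_left h0 hN

theorem abs_div_mul_sq_add_one_le (hN : 0 < N) (hu : ∀ s, |u s| ≤ C * max N |s|) {s : ℝ}
    (hs : N ≤ |s|) : |u s / (s * (s ^ 2 + 1))| ≤ C * (1 + s ^ 2)⁻¹ := by
  have hs₀ : 0 < |s| := hN.trans_le hs
  have hus := hu s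
  rw [max_eq_right hs] at hus
  rw [abs_div, abs_mul, abs_of_pos (by positivity : (0 : ℝ) < s ^ 2 + 1)]
  calc |u s| / (|s| * (s ^ 2 + 1)) ≤ C * |s| / (|s| * (s ^ 2 + 1)) := by gcongr
    _ = C * (1 + s ^ 2)⁻¹ := by field_simp; ring

theorem abs_div_mul_sq_add_one_sub_div_le (hu : ∀ s, |u s| ≤ C * max N |s|) {s : ℝ}
    (hs : |s| ≤ N) : |u s / (s * (s ^ 2 + 1)) - u s / s| ≤ C * N * N := by
  have hus := hu s
  rw [max_eq_left hs] at hus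
  have hdiff : u s / (s * (s ^ 2 + 1)) - u s / s = -(u s * s / (s ^ 2 + 1)) := by
    rcases eq_or_ne s 0 with rfl | hs₀
    · simp
    · field_simp; ring
  rw [hdiff, abs_neg, abs_div, abs_mul, abs_of_pos (by positivity : (0 : ℝ) < s ^ 2 + 1)]
  calc |u s| * |s| / (s ^ 2 + 1) ≤ |u s| * |s| :=
        div_le_self (by positivity) (by nlinarith [sq_nonneg s])
    _ ≤ C * N * N := mul_le_mul hus hs (abs_nonneg s) ((abs_nonneg _).trans hus)

theorem integrableOn_compl_Ioc (hum : Measurable u) (hN : 0 < N)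
    (hu : ∀ s, |u s| ≤ C * max N |s|) :
    IntegrableOn (fun s ↦ u s / (s * (s ^ 2 + 1))) (Ioc (-N) N)ᶜ := by
  refine Integrable.mono' (integrable_inv_one_add_sq.const_mul C).integrableOn
    (by fun_prop : Measurable fun s ↦ u s / (s * (s ^ 2 + 1))).aestronglyMeasurable ?_
  refine (ae_restrict_iff' measurableSet_Ioc.compl).2 (.of_forall fun s hs ↦ ?_)
  exact abs_div_mul_sq_add_one_le hN hu (le_abs_of_notMem_Ioc hs)

theorem abs_setIntegral_compl_Ioc_le (hN : 0 < N)
    (hu : ∀ s, |u s| ≤ C * max N |s|) :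
    |∫ s in (Ioc (-N) N)ᶜ, u s / (s * (s ^ 2 + 1))| ≤ C * π := by
  have hw := integrable_inv_one_add_sq.const_mul C
  calc |∫ s in (Ioc (-N) N)ᶜ, u s / (s * (s ^ 2 + 1))|
      ≤ ∫ s in (Ioc (-N) N)ᶜ, C * (1 + s ^ 2)⁻¹ := by
        rw [← norm_eq_abs]
        refine norm_integral_le_of_norm_le hw.integrableOn ?_
        refine (ae_restrict_iff' measurableSet_Ioc.compl).2 (.of_forall fun s hs ↦ ?_)
        exact abs_div_mul_sq_add_one_le hN hu (le_abs_of_notMem_Ioc hs)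
    _ ≤ ∫ s, C * (1 + s ^ 2)⁻¹ :=
        setIntegral_le_integral hw (.of_forall fun s ↦ by
          have := nonneg_of_abs_le_mul_max hN hu
          positivity)
    _ = C * π := by rw [MeasureTheory.integral_const_mul, integral_univ_inv_one_add_sq]

theorem abs_setIntegral_Ioc_sub_le (hN : 0 < N) (hu : ∀ s, |u s| ≤ C * max N |s|) :
    |∫ s in Ioc (-N) N, (u s / (s * (s ^ 2 + 1)) - u s / s)| ≤ 2 * C * N ^ 3 := by
  have hbound : ∀ s ∈ Ioc (-N) N, ‖u s / (s * (s ^ 2 + 1)) - u s / s‖ ≤ C * N * N :=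
    fun s hs ↦ abs_div_mul_sq_add_one_sub_div_le hu (abs_le.2 ⟨hs.1.le, hs.2⟩)
  have h := norm_setIntegral_le_of_norm_le_const (μ := volume) measure_Ioc_lt_top hbound
  rw [norm_eq_abs, measureReal_def, volume_Ioc, ENNReal.toReal_ofReal (by linarith)] at h
  linarith

theorem abs_integral_div_mul_sq_add_one_sub_integral_div_le (hum : Measurable u) (hN : 0 < N)
    (hu : ∀ s, |u s| ≤ C * max N |s|) :
    |(∫ s, u s / (s * (s ^ 2 + 1))) - ∫ s in (-N)..N, u s / s| ≤ C * π + 2 * C * N ^ 3 := by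
  set f := fun s ↦ u s / (s * (s ^ 2 + 1))
  set g := fun s ↦ u s / s
  have hNN : -N ≤ N := by linarith
  by_cases hg : IntegrableOn g (Icc (-N) N)
  · have hf : Integrable f := by
      rw [← integrableOn_univ, ← union_compl_self (Ioc (-N) N)]
      exact ((integrableOn_div_mul_sq_add_one_iff isCompact_Icc).2 hg).mono_set
        Ioc_subset_Icc_self |>.union (integrableOn_compl_Ioc hum hN hu)
    have hsplit : (∫ s, f s) - ∫ s in (-N)..N, g s =
        (∫ s in (Ioc (-N) N)ᶜ, f s) + ∫ s in Ioc (-N) N, (f s - g s) := by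
      rw [← integral_add_compl measurableSet_Ioc hf, integral_of_le hNN,
        integral_sub hf.integrableOn (hg.mono_set Ioc_subset_Icc_self)]
      ring
    rw [hsplit]
    exact (abs_add_le _ _).trans
      (add_le_add (abs_setIntegral_compl_Ioc_le hN hu) (abs_setIntegral_Ioc_sub_le hN hu))
  · have hf : ¬Integrable f := fun hf ↦
      hg ((integrableOn_div_mul_sq_add_one_iff isCompact_Icc).1 hf.integrableOn)
    rw [integral_undef hf, intervalIntegral.integral_undef
      (mt (intervalIntegrable_iff_integrableOn_Icc_of_le hNN).1 hg)]
    have := nonneg_of_abs_le_mul_max hN hu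
    simp only [sub_zero, abs_zero]
    positivity

end GrowthBound

theorem stmt_11_general (φ : ℝ → ℝ) (hmono : Monotone φ) (hcont : Continuous φ)
    (N C₁ C₂ : ℝ) (hN : 0 < N)
    (hbl : ∀ x₁ x₂ : ℝ, N ≤ x₂ - x₁ →
      C₁ * (x₂ - x₁) ≤ φ x₂ - φ x₁ ∧ φ x₂ - φ x₁ ≤ C₂ * (x₂ - x₁))
    (θ : ℝ → ℝ) (hθ : ∀ x, θ x = ∫ t in (x - N)..(x + N), (φ t - φ x) / (t - x)) :
    ∃ C > (0:ℝ), ∀ x : ℝ,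
      |(∫ t : ℝ, (φ t - φ x) / ((t - x) * ((t - x) ^ 2 + 1))) - θ x| ≤ C := by
  refine ⟨max 1 (C₂ * π + 2 * C₂ * N ^ 3), lt_max_of_lt_left one_pos, fun x ↦ ?_⟩
  set u := fun s ↦ φ (s + x) - φ x
  have hu : ∀ s, |u s| ≤ C₂ * max N |s| := fun s ↦ by
    simpa using hmono.abs_sub_le_mul_max (fun a b h ↦ (hbl a b h).2) x (s + x)
  have hline : ∫ t, (φ t - φ x) / ((t - x) * ((t - x) ^ 2 + 1)) =
      ∫ s, u s / (s * (s ^ 2 + 1)) := by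
    simpa only [u, sub_add_cancel] using
      integral_sub_right_eq_self (fun s ↦ u s / (s * (s ^ 2 + 1))) x
  have hwindow : θ x = ∫ s in (-N)..N, u s / s := by
    simpa only [hθ, u, sub_add_cancel, sub_sub_cancel_left, add_sub_cancel_left] using
      intervalIntegral.integral_comp_sub_right (a := x - N) (b := x + N) (fun s ↦ u s / s) x
  rw [hline, hwindow]
  exact (abs_integral_div_mul_sq_add_one_sub_integral_div_le (by fun_prop) hN hu).trans
    (le_max_right _ _)

theorem stmt_11 (φ : ℝ → ℝ) (hmono : Monotone φ) (hcont : Continuous φ)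
    (N C₁ C₂ : ℝ) (hN : 0 < N) (hC₁ : 0 < C₁) (hC₂ : 0 < C₂)
    (hbl : ∀ x₁ x₂ : ℝ, N ≤ x₂ - x₁ →
      C₁ * (x₂ - x₁) ≤ φ x₂ - φ x₁ ∧ φ x₂ - φ x₁ ≤ C₂ * (x₂ - x₁))
    (θ : ℝ → ℝ) (hθ : ∀ x, θ x = ∫ t in (x - N)..(x + N), (φ t - φ x) / (t - x)) :
    ∃ C > (0:ℝ), ∀ x : ℝ,
      |(∫ t : ℝ, (φ t - φ x) / ((t - x) * ((t - x) ^ 2 + 1))) - θ x| ≤ C :=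
  stmt_11_general φ hmono hcont N C₁ C₂ hN hbl θ hθ
end

section
/- Fix α ∈ [0, 2]. There exist constants C > 0 and R > 0 such that for every real x with |x| ≥ R, Σ_{n ∈ ℤ, n ≠ 0, |n − x| ≥ 1/2} 1/(|n|^α (n − x)²) ≤ C |x|^{−α}. -/
set_option maxHeartbeats 1000000

noncomputable def hf13 : ℤ → ℝ := fun k => if k = 0 then 1 else 1 / (k : ℝ) ^ 2

lemma hf13_nonneg (k : ℤ) : 0 ≤ hf13 k := by
  unfold hf13; split <;> positivity

lemma hf13_summable : Summable hf13 := by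
  have h1 : Summable (fun k : ℤ => 1 / (k : ℝ) ^ 2) :=
    Real.summable_one_div_int_pow.mpr one_lt_two
  have h2 : Summable (fun k : ℤ => if k = 0 then (1:ℝ) else 0) :=
    summable_of_ne_finset_zero (s := {0}) (by intro b hb; simp at hb; simp [hb])
  apply (h1.add h2).congr
  intro k
  unfold hf13
  by_cases hk : k = 0 <;> simp [hk]

lemma key13 (α x : ℝ) (hα0 : 0 ≤ α) (hα2 : α ≤ 2) (hx : 1 ≤ |x|) (n : ℤ) :
    (if n ≠ 0 ∧ (1:ℝ)/2 ≤ |(n : ℝ) - x| then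
        1 / (|(n : ℝ)| ^ α * ((n : ℝ) - x) ^ 2) else 0)
      ≤ (2 / |x|) ^ α * 4 * (hf13 (n - round x) + hf13 n) := by
  have hxpos : (0:ℝ) < |x| := by linarith
  have hrpos : (0:ℝ) ≤ (2 / |x|) ^ α * 4 := by positivity
  have hRHSnn : 0 ≤ (2 / |x|) ^ α * 4 * (hf13 (n - round x) + hf13 n) :=
    mul_nonneg hrpos (add_nonneg (hf13_nonneg _) (hf13_nonneg _))
  split
  case isFalse => exact hRHSnn
  case isTrue h =>
    obtain ⟨hn, hnx⟩ := h
    have hN1 : (1:ℝ) ≤ |(n : ℝ)| := by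
      have := Int.one_le_abs hn
      calc (1:ℝ) = ((1:ℤ):ℝ) := by norm_num
        _ ≤ ((|n| : ℤ) : ℝ) := by exact_mod_cast this
        _ = |(n : ℝ)| := by push_cast; ring
    have hNpos : (0:ℝ) < |(n : ℝ)| := by linarith
    have hNa : (0:ℝ) < |(n : ℝ)| ^ α := Real.rpow_pos_of_pos hNpos α
    have hD : (1:ℝ)/4 ≤ ((n : ℝ) - x) ^ 2 := by
      nlinarith [sq_abs ((n : ℝ) - x)]
    have hDpos : (0:ℝ) < ((n : ℝ) - x) ^ 2 := by linarith
    -- Step 1 : 1/(n-x)^2 ≤ 4 * hf13 (n - round x)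
    have step1 : 1 / ((n : ℝ) - x) ^ 2 ≤ 4 * hf13 (n - round x) := by
      set k : ℤ := n - round x with hkdef
      have hnk : (n : ℝ) - x = (k : ℝ) - (x - (round x : ℝ)) := by
        rw [hkdef]; push_cast; ring
      by_cases hk : k = 0
      · unfold hf13; rw [if_pos hk]
        rw [div_le_iff₀ hDpos]; nlinarith
      · unfold hf13; rw [if_neg hk]
        have hk1 : (1:ℝ) ≤ |(k : ℝ)| := by
          have := Int.one_le_abs hk
          calc (1:ℝ) = ((1:ℤ):ℝ) := by norm_num
            _ ≤ ((|k| : ℤ) : ℝ) := by exact_mod_cast this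
            _ = |(k : ℝ)| := by push_cast; ring
        have hround : |x - (round x : ℝ)| ≤ 1/2 := abs_sub_round x
        have htri : |(k : ℝ)| - |x - (round x : ℝ)| ≤ |(k : ℝ) - (x - (round x : ℝ))| :=
          abs_sub_abs_le_abs_sub _ _
        have habs : |(k : ℝ)| / 2 ≤ |(n : ℝ) - x| := by
          rw [hnk]; linarith
        have hkpos : (0:ℝ) < (k : ℝ) ^ 2 := by positivity
        rw [mul_one_div, div_le_div_iff₀ hDpos hkpos]
        nlinarith [sq_abs ((n : ℝ) - x), sq_abs ((k : ℝ)), abs_nonneg ((n : ℝ) - x)]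
    by_cases hcase : |x| / 2 ≤ |(n : ℝ)|
    · -- case A
      have hA : (|x| / 2) ^ α ≤ |(n : ℝ)| ^ α :=
        Real.rpow_le_rpow (by positivity) hcase hα0
      have hApos : (0:ℝ) < (|x| / 2) ^ α := Real.rpow_pos_of_pos (by positivity) α
      have hinv : 1 / |(n : ℝ)| ^ α ≤ (2 / |x|) ^ α := by
        have : (2 / |x|) ^ α = 1 / (|x| / 2) ^ α := by
          rw [← inv_div |x| 2, Real.inv_rpow (by positivity), one_div]
        rw [this]
        exact one_div_le_one_div_of_le hApos hA
      calc 1 / (|(n : ℝ)| ^ α * ((n : ℝ) - x) ^ 2)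
          = (1 / |(n : ℝ)| ^ α) * (1 / ((n : ℝ) - x) ^ 2) := by
            rw [one_div_mul_one_div]
        _ ≤ (2 / |x|) ^ α * (4 * hf13 (n - round x)) := by
            apply mul_le_mul hinv step1 (by positivity)
            positivity
        _ ≤ (2 / |x|) ^ α * 4 * (hf13 (n - round x) + hf13 n) := by
            have := hf13_nonneg n
            have h4 : (0:ℝ) ≤ (2 / |x|) ^ α := by positivity
            nlinarith
    · -- case B : |n| < |x|/2
      push_neg at hcase
      have hNx : |(n : ℝ)| ≤ |x| := by linarith
      have hdx : |x| / 2 ≤ |(n : ℝ) - x| := by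
        have htri : |x| - |(n : ℝ)| ≤ |x - (n : ℝ)| := abs_sub_abs_le_abs_sub _ _
        rw [abs_sub_comm] at htri
        linarith
      have hxsq : |x| ^ 2 ≤ 4 * ((n : ℝ) - x) ^ 2 := by
        nlinarith [sq_abs ((n : ℝ) - x), abs_nonneg ((n : ℝ) - x)]
      have hsplit : (n : ℝ) ^ 2 = |(n : ℝ)| ^ α * |(n : ℝ)| ^ (2 - α) := by
        rw [← Real.rpow_add hNpos]
        norm_num
      have hle : |(n : ℝ)| ^ (2 - α) ≤ |x| ^ (2 - α) :=
        Real.rpow_le_rpow (abs_nonneg _) hNx (by linarith)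
      have hxsplit : |x| ^ α * |x| ^ (2 - α) = |x| ^ 2 := by
        rw [← Real.rpow_add hxpos]
        norm_num
      have hxa : (0:ℝ) < |x| ^ α := Real.rpow_pos_of_pos hxpos α
      have main : |x| ^ α * (n : ℝ) ^ 2 ≤ 4 * (|(n : ℝ)| ^ α * ((n : ℝ) - x) ^ 2) := by
        calc |x| ^ α * (n : ℝ) ^ 2 = |(n : ℝ)| ^ α * (|x| ^ α * |(n : ℝ)| ^ (2 - α)) := by
              rw [hsplit]; ring
          _ ≤ |(n : ℝ)| ^ α * (|x| ^ α * |x| ^ (2 - α)) := by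
              apply mul_le_mul_of_nonneg_left _ (le_of_lt hNa)
              exact mul_le_mul_of_nonneg_left hle (le_of_lt hxa)
          _ = |(n : ℝ)| ^ α * |x| ^ 2 := by rw [hxsplit]
          _ ≤ |(n : ℝ)| ^ α * (4 * ((n : ℝ) - x) ^ 2) := by
              exact mul_le_mul_of_nonneg_left hxsq (le_of_lt hNa)
          _ = 4 * (|(n : ℝ)| ^ α * ((n : ℝ) - x) ^ 2) := by ring
      have h2a : (1:ℝ) ≤ 2 ^ α := by
        have h := Real.rpow_le_rpow_of_exponent_le (one_le_two (α := ℝ)) hα0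
        rwa [Real.rpow_zero] at h
      have hn2pos : (0:ℝ) < (n : ℝ) ^ 2 := by
        have : (n : ℝ) ≠ 0 := by exact_mod_cast hn
        positivity
      have hfn : hf13 n = 1 / (n : ℝ) ^ 2 := by
        unfold hf13; rw [if_neg hn]
      have goalB : 1 / (|(n : ℝ)| ^ α * ((n : ℝ) - x) ^ 2)
          ≤ (2 / |x|) ^ α * 4 * hf13 n := by
        rw [hfn]
        have hdiv : (2 / |x|) ^ α = 2 ^ α / |x| ^ α :=
          Real.div_rpow (by norm_num) (abs_nonneg x) α
        rw [hdiv]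
        rw [div_mul_eq_mul_div, div_mul_eq_mul_div, mul_one_div, div_div]
        rw [div_le_div_iff₀ (by positivity) (by positivity), one_mul]
        have hpos : (0:ℝ) < |(n : ℝ)| ^ α * ((n : ℝ) - x) ^ 2 := mul_pos hNa hDpos
        nlinarith [main, h2a, hpos]
      calc 1 / (|(n : ℝ)| ^ α * ((n : ℝ) - x) ^ 2) ≤ (2 / |x|) ^ α * 4 * hf13 n := goalB
        _ ≤ (2 / |x|) ^ α * 4 * (hf13 (n - round x) + hf13 n) := by
            apply mul_le_mul_of_nonneg_left _ hrpos
            have := hf13_nonneg (n - round x)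
            linarith

theorem stmt_13 (α : ℝ) (hα : α ∈ Set.Icc (0:ℝ) 2) :
    ∃ C > (0:ℝ), ∃ R > (0:ℝ), ∀ x : ℝ, R ≤ |x| →
      Summable (fun n : ℤ =>
        if n ≠ 0 ∧ (1:ℝ)/2 ≤ |(n : ℝ) - x| then
          1 / (|(n : ℝ)| ^ α * ((n : ℝ) - x) ^ 2) else 0) ∧
      (∑' n : ℤ,
        if n ≠ 0 ∧ (1:ℝ)/2 ≤ |(n : ℝ) - x| then
          1 / (|(n : ℝ)| ^ α * ((n : ℝ) - x) ^ 2) else 0) ≤ C * |x| ^ (-α) := by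
  obtain ⟨hα0, hα2⟩ := hα
  set S : ℝ := ∑' k : ℤ, hf13 k with hSdef
  have hSnn : 0 ≤ S := tsum_nonneg hf13_nonneg
  refine ⟨32 * S + 1, by linarith, 1, one_pos, ?_⟩
  intro x hx
  have hxpos : (0:ℝ) < |x| := by linarith
  set f : ℤ → ℝ := fun n =>
    if n ≠ 0 ∧ (1:ℝ)/2 ≤ |(n : ℝ) - x| then
      1 / (|(n : ℝ)| ^ α * ((n : ℝ) - x) ^ 2) else 0 with hfdef
  set g : ℤ → ℝ := fun n => (2 / |x|) ^ α * 4 * (hf13 (n - round x) + hf13 n) with hgdef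
  have hfg : ∀ n, f n ≤ g n := fun n => key13 α x hα0 hα2 hx n
  have hfnn : ∀ n, 0 ≤ f n := by
    intro n; rw [hfdef]; dsimp only; split <;> positivity
  have hshift : Summable (fun n : ℤ => hf13 (n - round x)) := by
    have h := (Equiv.subRight (round x)).summable_iff.mpr hf13_summable
    simpa [Function.comp_def, Equiv.subRight] using h
  have hgsum : Summable g := by
    rw [hgdef]
    exact (hshift.add hf13_summable).mul_left _
  have hfsum : Summable f := Summable.of_nonneg_of_le hfnn hfg hgsum
  refine ⟨hfsum, ?_⟩
  have htsum_le : ∑' n, f n ≤ ∑' n, g n := Summable.tsum_le_tsum hfg hfsum hgsum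
  have hshift_eq : ∑' n : ℤ, hf13 (n - round x) = S := by
    have h := (Equiv.subRight (round x)).tsum_eq hf13
    simpa [Equiv.subRight] using h
  have hgval : ∑' n, g n = (2 / |x|) ^ α * 4 * (S + S) := by
    rw [hgdef]
    rw [tsum_mul_left, Summable.tsum_add hshift hf13_summable, hshift_eq]
  have hpow : (2 / |x|) ^ α ≤ 4 * |x| ^ (-α) := by
    have h1 : (2 / |x|) ^ α = 2 ^ α * (|x| ^ α)⁻¹ := by
      rw [Real.div_rpow (by norm_num) (abs_nonneg x)]
      rw [div_eq_mul_inv]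
    have h2 : (2:ℝ) ^ α ≤ 4 := by
      have h := Real.rpow_le_rpow_of_exponent_le (one_le_two (α := ℝ)) hα2
      rwa [show ((2:ℝ) ^ (2:ℝ)) = 4 by
        rw [show ((2:ℝ)) = ((2:ℕ):ℝ) by norm_num, Real.rpow_natCast]; norm_num] at h
    rw [h1, Real.rpow_neg (abs_nonneg x)]
    have hinvnn : (0:ℝ) ≤ (|x| ^ α)⁻¹ := by positivity
    exact mul_le_mul_of_nonneg_right h2 hinvnn
  have hxann : (0:ℝ) ≤ |x| ^ (-α) := Real.rpow_nonneg (abs_nonneg x) _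
  calc ∑' n, f n ≤ ∑' n, g n := htsum_le
    _ = (2 / |x|) ^ α * 4 * (S + S) := hgval
    _ ≤ (4 * |x| ^ (-α)) * 4 * (S + S) := by
        apply mul_le_mul_of_nonneg_right (mul_le_mul_of_nonneg_right hpow (by norm_num))
        linarith
    _ = 32 * S * |x| ^ (-α) := by ring
    _ ≤ (32 * S + 1) * |x| ^ (-α) := by nlinarith
end

section
/- Fix α ∈ [0, 2]. For x ∈ ℝ let n_x denote the integer closest to x (the smaller one when x is a half-integer). Define S(x) = 1/(x² + 1) + Σ_{n ∈ ℤ, n ≠ 0} |n|^{−α} / ((x − n)² + |n|^{−2α}) and μ(x) = 1/(x² + 1) if −1/2 < x ≤ 1/2, and μ(x) = |n_x|^{−α} / ((x − n_x)² + |n_x|^{−2α}) otherwise. Then the series defining S converges for every x and there exist constants 0 < c ≤ C with c·μ(x) ≤ S(x) ≤ C·μ(x) for all x ∈ ℝ. -/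
/-!
Let `m` be the integer nearest to `x` and `w(m) = max(1, |m|)^(-α)`. Since `|x - n| ≥ |m - n| / 2`
for `n ≠ m`, the `n`-th term of the series is at most `4 |n|^(-α) / (m - n)²`, and this is at most
`4 w(m) (1 / (m - n)² + 1 / n²)`: if `|n| ≥ |m| / 2` then `|n|^(-α) ≤ 2^α |m|^(-α)`, otherwise
`(m - n)² ≥ m² / 4` and `|n|^(-α) n² = |n|^(2 - α) ≤ |m|^(2 - α)`; both use `α ≤ 2`. Summing,
all terms of `S(x)` other than the `m`-th are `O(w(m))`, while the `m`-th term, which is `μ(x)`,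
is at least `4 w(m) / 5` because its width `|m|^(-α)` is at most `1`.
-/

/-- The integer closest to `x`, taking the smaller one when `x` is a half-integer. -/
noncomputable def nearestInt (x : ℝ) : ℤ := ⌈x - 1 / 2⌉

theorem abs_sub_nearestInt_le (x : ℝ) : |x - nearestInt x| ≤ 1 / 2 := by
  have h₁ : x - 1 / 2 ≤ nearestInt x := Int.le_ceil _
  have h₂ : (nearestInt x : ℝ) < x - 1 / 2 + 1 := Int.ceil_lt_add_one _
  rw [abs_le]
  constructor <;> linarith

theorem nearestInt_eq_zero_iff {x : ℝ} : nearestInt x = 0 ↔ -(1 / 2) < x ∧ x ≤ 1 / 2 := by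
  rw [nearestInt, Int.ceil_eq_zero_iff, Set.mem_Ioc]
  constructor <;> rintro ⟨h₁, h₂⟩ <;> constructor <;> linarith

theorem one_le_abs_intCast {n : ℤ} (hn : n ≠ 0) : (1 : ℝ) ≤ |(n : ℝ)| := by
  rw [← Int.cast_abs]
  exact_mod_cast Int.one_le_abs hn

theorem sq_sub_le_four_mul_sq_sub {x y z : ℝ} (hyz : 1 ≤ |y - z|) (hxy : |x - y| ≤ 1 / 2) :
    (y - z) ^ 2 ≤ 4 * (x - z) ^ 2 := by
  have h : |y - z| ≤ |2 * (x - z)| := by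
    rw [abs_mul, abs_two]
    linarith [abs_sub_le y x z, abs_sub_comm x y]
  nlinarith [sq_le_sq.2 h]

theorem rpow_neg_div_sq_le {a b d α : ℝ} (ha : 0 < a) (hb : 0 < b) (hd : 0 < d)
    (hbad : b ≤ a + d) (hα₀ : 0 ≤ α) (hα₂ : α ≤ 2) :
    a ^ (-α) / d ^ 2 ≤ 4 * b ^ (-α) * (1 / d ^ 2 + 1 / a ^ 2) := by
  have hB : 0 < b ^ (-α) := Real.rpow_pos_of_pos hb _
  rcases le_or_gt b (2 * a) with hba | hba
  · have h2 : (2 : ℝ) ^ α ≤ 4 := by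
      calc (2 : ℝ) ^ α ≤ 2 ^ (2 : ℝ) := Real.rpow_le_rpow_of_exponent_le one_le_two hα₂
        _ = 4 := by norm_num
    have hab : a ^ (-α) ≤ 4 * b ^ (-α) :=
      calc a ^ (-α) ≤ (b * 2⁻¹) ^ (-α) :=
            Real.rpow_le_rpow_of_nonpos (by positivity) (by linarith) (by linarith)
        _ = 2 ^ α * b ^ (-α) := by
            rw [Real.mul_rpow hb.le (by norm_num), Real.inv_rpow zero_le_two, Real.rpow_neg zero_le_two,
              inv_inv, mul_comm]
        _ ≤ 4 * b ^ (-α) := by gcongr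
    calc a ^ (-α) / d ^ 2 ≤ 4 * b ^ (-α) * (1 / d ^ 2) := by
          rw [mul_one_div]; gcongr
      _ ≤ 4 * b ^ (-α) * (1 / d ^ 2 + 1 / a ^ 2) := by gcongr; simp; positivity
  · have hbd : b ^ 2 ≤ 4 * d ^ 2 := by nlinarith
    have hpow : a ^ (-α) * a ^ 2 ≤ b ^ (-α) * b ^ 2 := by
      rw [← Real.rpow_two, ← Real.rpow_two, ← Real.rpow_add ha, ← Real.rpow_add hb]
      exact Real.rpow_le_rpow ha.le (by linarith) (by linarith)
    calc a ^ (-α) / d ^ 2 ≤ 4 * b ^ (-α) * (1 / a ^ 2) := by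
          rw [div_le_iff₀ (by positivity)]
          field_simp
          nlinarith
      _ ≤ 4 * b ^ (-α) * (1 / d ^ 2 + 1 / a ^ 2) := by gcongr; simp; positivity

noncomputable def lorentzian (α x : ℝ) (n : ℤ) : ℝ :=
  if n ≠ 0 then |(n : ℝ)| ^ (-α) / ((x - (n : ℝ)) ^ 2 + |(n : ℝ)| ^ (-(2 * α))) else 0

-- `max 1 |m|` gives the central term, of size `1`, the weight of `m = 0`.
noncomputable def weight (α : ℝ) (m : ℤ) : ℝ := max 1 |(m : ℝ)| ^ (-α)

-- `S x` is the sum of `summand α x m` over all `m : ℤ`, and `μ x = summand α x (nearestInt x)`.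
noncomputable def summand (α x : ℝ) (m : ℤ) : ℝ := if m = 0 then 1 / (x ^ 2 + 1) else lorentzian α x m

section

variable {α x : ℝ} {m n : ℤ}

theorem weight_pos (α : ℝ) (m : ℤ) : 0 < weight α m :=
  Real.rpow_pos_of_pos (by positivity) _

theorem lorentzian_nonneg (α x : ℝ) (n : ℤ) : 0 ≤ lorentzian α x n := by
  unfold lorentzian
  split_ifs <;> positivity

theorem lorentzian_le (hα₀ : 0 ≤ α) (hα₂ : α ≤ 2) (hx : |x - m| ≤ 1 / 2) (hnm : n ≠ m) :
    lorentzian α x n ≤ 16 * weight α m * (1 / ((m : ℝ) - n) ^ 2 + 1 / (n : ℝ) ^ 2) := by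
  unfold lorentzian
  split_ifs with hn
  · have hn₁ := one_le_abs_intCast hn
    have hmn₁ : 1 ≤ |(m : ℝ) - n| := by
      exact_mod_cast one_le_abs_intCast (sub_ne_zero.2 hnm.symm)
    have hmn : ((m : ℝ) - n) ^ 2 ≤ 4 * (x - n) ^ 2 := sq_sub_le_four_mul_sq_sub hmn₁ hx
    have hmn₀ : 0 < ((m : ℝ) - n) ^ 2 := by nlinarith [sq_abs ((m : ℝ) - n)]
    have key := rpow_neg_div_sq_le (a := |(n : ℝ)|) (b := max 1 |(m : ℝ)|) (d := |(m : ℝ) - n|)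
      (by linarith) (by positivity) (by linarith)
      (max_le (by linarith [abs_nonneg ((m : ℝ) - n)])
        (by simpa using abs_add_le (n : ℝ) (m - n))) hα₀ hα₂
    rw [sq_abs, sq_abs] at key
    calc |(n : ℝ)| ^ (-α) / ((x - n) ^ 2 + |(n : ℝ)| ^ (-(2 * α)))
        ≤ 4 * (|(n : ℝ)| ^ (-α) / ((m : ℝ) - n) ^ 2) := by
          rw [← mul_div_assoc, div_le_div_iff₀ (by positivity) hmn₀]
          nlinarith [Real.rpow_pos_of_pos (by linarith : (0 : ℝ) < |(n : ℝ)|) (-α),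
            Real.rpow_pos_of_pos (by linarith : (0 : ℝ) < |(n : ℝ)|) (-(2 * α))]
      _ ≤ 16 * weight α m * (1 / ((m : ℝ) - n) ^ 2 + 1 / (n : ℝ) ^ 2) := by
          rw [weight]; linarith
  · have := weight_pos α m
    positivity

theorem summable_inv_sq_sub (m : ℤ) : Summable fun n : ℤ => 1 / ((m : ℝ) - n) ^ 2 := by
  have h := (Real.summable_one_div_int_pow.2 one_lt_two).comp_injective (Equiv.subLeft m).injective
  simpa [Function.comp_def, Equiv.subLeft] using h

theorem tsum_inv_sq_sub (m : ℤ) :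
    ∑' n : ℤ, 1 / ((m : ℝ) - n) ^ 2 = ∑' n : ℤ, 1 / (n : ℝ) ^ 2 := by
  rw [← (Equiv.subLeft m).tsum_eq]
  simp [Equiv.subLeft]

theorem summable_majorant (α : ℝ) (m : ℤ) :
    Summable fun n : ℤ => 16 * weight α m * (1 / ((m : ℝ) - n) ^ 2 + 1 / (n : ℝ) ^ 2) :=
  ((summable_inv_sq_sub m).add (Real.summable_one_div_int_pow.2 one_lt_two)).mul_left _

theorem summable_lorentzian (hα₀ : 0 ≤ α) (hα₂ : α ≤ 2) (x : ℝ) :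
    Summable (lorentzian α x) := by
  refine (summable_majorant α (nearestInt x)).of_norm_bounded_eventually ?_
  filter_upwards [Filter.eventually_cofinite_ne (nearestInt x)] with n hn
  rw [Real.norm_of_nonneg (lorentzian_nonneg α x n)]
  exact lorentzian_le hα₀ hα₂ (abs_sub_nearestInt_le x) hn

theorem tsum_ite_lorentzian_le (hα₀ : 0 ≤ α) (hα₂ : α ≤ 2) (hx : |x - m| ≤ 1 / 2) :
    ∑' n, (if n = m then 0 else lorentzian α x n) ≤
      32 * (∑' n : ℤ, 1 / (n : ℝ) ^ 2) * weight α m := by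
  have hle : ∀ n, (if n = m then 0 else lorentzian α x n) ≤
      16 * weight α m * (1 / ((m : ℝ) - n) ^ 2 + 1 / (n : ℝ) ^ 2) := by
    intro n
    split_ifs with hn
    · have := weight_pos α m
      positivity
    · exact lorentzian_le hα₀ hα₂ hx hn
  have hnonneg : ∀ n, 0 ≤ (if n = m then 0 else lorentzian α x n) := fun n => by
    split_ifs
    exacts [le_rfl, lorentzian_nonneg α x n]
  calc ∑' n, (if n = m then 0 else lorentzian α x n)
      ≤ ∑' n : ℤ, 16 * weight α m * (1 / ((m : ℝ) - n) ^ 2 + 1 / (n : ℝ) ^ 2) :=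
        ((summable_majorant α m).of_nonneg_of_le hnonneg hle).tsum_le_tsum hle
          (summable_majorant α m)
    _ = 32 * (∑' n : ℤ, 1 / (n : ℝ) ^ 2) * weight α m := by
        rw [tsum_mul_left, (summable_inv_sq_sub m).tsum_add
          (Real.summable_one_div_int_pow.2 one_lt_two), tsum_inv_sq_sub]
        ring

theorem weight_zero (α : ℝ) : weight α 0 = 1 := by simp [weight]

theorem weight_of_ne_zero (hm : m ≠ 0) : weight α m = |(m : ℝ)| ^ (-α) := by
  rw [weight, max_eq_right (one_le_abs_intCast hm)]

theorem inv_sq_add_one_le_four_mul_weight (hα₂ : α ≤ 2) (hx : |x - m| ≤ 1 / 2) :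
    1 / (x ^ 2 + 1) ≤ 4 * weight α m := by
  have hb : 1 ≤ max 1 |(m : ℝ)| := le_max_left _ _
  have hbx : max 1 |(m : ℝ)| ^ 2 ≤ 4 * (x ^ 2 + 1) := by
    rcases eq_or_ne m 0 with rfl | hm
    · norm_num
      nlinarith [sq_nonneg x]
    · rw [max_eq_right (one_le_abs_intCast hm), sq_abs]
      have := sq_sub_le_four_mul_sq_sub (z := 0) (by simpa using one_le_abs_intCast hm) hx
      simp only [sub_zero] at this
      linarith
  calc 1 / (x ^ 2 + 1) ≤ 4 * max 1 |(m : ℝ)| ^ (-2 : ℝ) := by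
        rw [Real.rpow_neg (by positivity), Real.rpow_two, ← one_div, mul_one_div,
          div_le_div_iff₀ (by positivity) (by positivity)]
        linarith
    _ ≤ 4 * weight α m := by
        gcongr
        exact Real.rpow_le_rpow_of_exponent_le hb (by linarith)

theorem weight_le_summand (hα₀ : 0 ≤ α) (hx : |x - m| ≤ 1 / 2) :
    weight α m ≤ 5 / 4 * summand α x m := by
  have hxm : (x - m) ^ 2 ≤ 1 / 4 := by nlinarith [sq_abs (x - m), abs_nonneg (x - m)]
  unfold summand
  split_ifs with hm
  · subst hm
    rw [weight_zero, mul_one_div, le_div_iff₀ (by positivity)]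
    simp only [Int.cast_zero, sub_zero] at hxm
    linarith
  · have hm₁ := one_le_abs_intCast hm
    have h2 : |(m : ℝ)| ^ (-(2 * α)) ≤ 1 :=
      Real.rpow_le_one_of_one_le_of_nonpos hm₁ (by linarith)
    have h0 : 0 < |(m : ℝ)| ^ (-(2 * α)) := Real.rpow_pos_of_pos (by linarith) _
    rw [weight_of_ne_zero hm, lorentzian, if_pos hm, ← mul_div_assoc,
      le_div_iff₀ (by positivity)]
    nlinarith [Real.rpow_pos_of_pos (by linarith : (0 : ℝ) < |(m : ℝ)|) (-α)]

theorem summand_le_inv_sq_add_one_add_tsum (hα₀ : 0 ≤ α) (hα₂ : α ≤ 2) (x : ℝ) (m : ℤ) :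
    summand α x m ≤ 1 / (x ^ 2 + 1) + ∑' n, lorentzian α x n := by
  have hsum := summable_lorentzian hα₀ hα₂ x
  have h₁ : 0 ≤ 1 / (x ^ 2 + 1) := by positivity
  have h₂ : lorentzian α x m ≤ ∑' n, lorentzian α x n :=
    hsum.le_tsum m fun n _ => lorentzian_nonneg α x n
  have h₃ : 0 ≤ ∑' n, lorentzian α x n := tsum_nonneg (lorentzian_nonneg α x)
  unfold summand
  split_ifs <;> linarith

theorem inv_sq_add_one_add_tsum_le (hα₀ : 0 ≤ α) (hα₂ : α ≤ 2) (hx : |x - m| ≤ 1 / 2) :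
    1 / (x ^ 2 + 1) + ∑' n, lorentzian α x n ≤
      (6 + 40 * ∑' n : ℤ, 1 / (n : ℝ) ^ 2) * summand α x m := by
  have htail := tsum_ite_lorentzian_le hα₀ hα₂ hx
  have hinv := inv_sq_add_one_le_four_mul_weight hα₂ hx
  have hw := weight_le_summand hα₀ hx
  set T := ∑' n : ℤ, 1 / (n : ℝ) ^ 2
  have hT : 0 ≤ T := tsum_nonneg fun n => by positivity
  have hw' := mul_le_mul_of_nonneg_left hw (by positivity : (0 : ℝ) ≤ 4 + 32 * T)
  rw [(summable_lorentzian hα₀ hα₂ x).tsum_eq_add_tsum_ite m]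
  unfold summand at hw' ⊢
  split_ifs at hw' ⊢ with hm
  · subst hm
    rw [lorentzian, if_neg (not_not.2 rfl)]
    nlinarith
  · nlinarith

end

theorem stmt_14 (α : ℝ) (hα : α ∈ Set.Icc (0:ℝ) 2)
    (S : ℝ → ℝ)
    (hS : ∀ x, S x = 1 / (x ^ 2 + 1) +
      ∑' n : ℤ, if n ≠ 0 then
        |(n : ℝ)| ^ (-α) / ((x - (n : ℝ)) ^ 2 + |(n : ℝ)| ^ (-(2 * α))) else 0)
    (μ : ℝ → ℝ)
    (hμ : ∀ x, μ x = if -(1/2:ℝ) < x ∧ x ≤ 1/2 then 1 / (x ^ 2 + 1)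
      else |(nearestInt x : ℝ)| ^ (-α) /
        ((x - (nearestInt x : ℝ)) ^ 2 + |(nearestInt x : ℝ)| ^ (-(2 * α)))) :
    (∀ x : ℝ, Summable (fun n : ℤ => if n ≠ 0 then
        |(n : ℝ)| ^ (-α) / ((x - (n : ℝ)) ^ 2 + |(n : ℝ)| ^ (-(2 * α))) else 0)) ∧
    ∃ c C : ℝ, 0 < c ∧ c ≤ C ∧ ∀ x : ℝ, c * μ x ≤ S x ∧ S x ≤ C * μ x := by
  obtain ⟨hα₀, hα₂⟩ := hα
  have hT : 0 ≤ ∑' n : ℤ, 1 / (n : ℝ) ^ 2 := tsum_nonneg fun n => by positivity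
  refine ⟨summable_lorentzian hα₀ hα₂, 1, 6 + 40 * ∑' n : ℤ, 1 / (n : ℝ) ^ 2, one_pos,
    by linarith, fun x => ?_⟩
  have hμx : μ x = summand α x (nearestInt x) := by
    rw [hμ, summand, lorentzian]
    simp only [← nearestInt_eq_zero_iff]
    split_ifs <;> trivial
  rw [one_mul, hS, hμx]
  exact ⟨summand_le_inv_sq_add_one_add_tsum hα₀ hα₂ x _,
    inv_sq_add_one_add_tsum_le hα₀ hα₂ (abs_sub_nearestInt_le x)⟩
end

section
/- Fix α ∈ [0, 2]. The infinite product E(z) = (z + i) ∏_{n=1}^∞ (1 − z/(n − i n^{−α})) (1 + z/(n + i n^{−α})) converges locally uniformly on ℂ, defining an entire function, and for every ε > 0 there exist constants 0 < c ≤ C such that c·e^{π Im z} ≤ |E(z)| ≤ C·e^{π Im z} whenever Im z ≥ ε. -/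
/-!
Write `N = n + 1` and `t = N ^ (-α) ∈ (0, 1]`. The `n`-th factor equals
`(N² - (z + i t)²) / (N² + t²)`, so it is `1 + O(|z|² / N²)`, which gives locally uniform
convergence. It differs from the factor `1 - (z + i)² / N²` of Euler's product for
`sin (π (z + i))` only in that `Im (z + i) = y + 1` is lowered to `y + t` and `N²` is raised to
`N² + t²`. For `y ≥ 0` this makes every factor smaller in modulus than the sine factor, and the
ratio of the two moduli is at most `exp ((y + 1) / ((N - x)² + y²) + (y + 1) / ((N + x)² + y²)
+ 1 / N²)`, whose sum over `N` is bounded for `y ≥ ε` uniformly in `x`. So `|E z|` is comparable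
to `|sin (π (z + i))|`, and `sinh (Im w) ≤ |sin w| ≤ cosh (Im w)` turns this into `e^{π y}`.
-/

open Filter Topology Complex Finset
open scoped Real

theorem Complex.sq_norm_sin (w : ℂ) :
    ‖Complex.sin w‖ ^ 2 = Real.sin w.re ^ 2 + Real.sinh w.im ^ 2 := by
  rw [Complex.sq_norm, Complex.sin_eq, Complex.normSq_apply]
  simp only [← Complex.ofReal_sin, ← Complex.ofReal_cos, ← Complex.ofReal_cosh,
    ← Complex.ofReal_sinh, add_re, add_im, mul_re, mul_im, ofReal_re, ofReal_im, I_re, I_im]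
  nlinarith [Real.cosh_sq w.im, Real.sin_sq_add_cos_sq w.re]

theorem Complex.norm_sin_le_cosh_im (w : ℂ) : ‖Complex.sin w‖ ≤ Real.cosh w.im := by
  refine (pow_le_pow_iff_left₀ (norm_nonneg _) (Real.cosh_pos _).le two_ne_zero).1 ?_
  rw [Complex.sq_norm_sin, Real.cosh_sq]
  nlinarith [Real.sin_sq_le_one w.re]

theorem Complex.sinh_im_le_norm_sin (w : ℂ) : Real.sinh w.im ≤ ‖Complex.sin w‖ := by
  refine (le_abs_self _).trans (abs_le_of_sq_le_sq' ?_ (norm_nonneg _)).2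
  rw [sq_abs, Complex.sq_norm_sin]
  nlinarith [sq_nonneg (Real.sin w.re)]

theorem Real.cosh_add_le_cosh_mul_exp (a : ℝ) {b : ℝ} (hb : 0 ≤ b) :
    Real.cosh (a + b) ≤ Real.cosh a * Real.exp b := by
  have : Real.exp (-(a + b)) ≤ Real.exp (-a) * Real.exp b := by
    rw [← Real.exp_add]; exact Real.exp_le_exp.2 (by linarith)
  rw [Real.cosh_eq, Real.cosh_eq, Real.exp_add]
  nlinarith

theorem Real.sinh_mul_exp_le_sinh_add (a : ℝ) {b : ℝ} (hb : 0 ≤ b) :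
    Real.sinh a * Real.exp b ≤ Real.sinh (a + b) := by
  have : Real.exp (-(a + b)) ≤ Real.exp (-a) * Real.exp b := by
    rw [← Real.exp_add]; exact Real.exp_le_exp.2 (by linarith)
  rw [Real.sinh_eq, Real.sinh_eq, Real.exp_add]
  nlinarith

theorem one_div_sq_add_sq_le_of_nonneg {y b : ℝ} (hy : 0 < y) (hb : 0 ≤ b) :
    1 / (b ^ 2 + y ^ 2) ≤ 2 * (y + 1) / y ^ 2 * (y / ((b + y) * (b + y + 1))) := by
  rw [div_le_iff₀ (by positivity)]
  field_simp
  nlinarith [sq_nonneg (b - y), mul_nonneg hb hy.le, mul_nonneg (mul_nonneg hb hy.le) hy.le]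

/-- `s ↦ s / (|s| + y)` is increasing with values in `[-1, 1]`, so sums of `1 / ((n + a)² + y²)`
telescope, uniformly in the shift `a`. -/
theorem one_div_sq_add_sq_le_sub {y : ℝ} (hy : 0 < y) (s : ℝ) :
    1 / (s ^ 2 + y ^ 2) ≤
      2 * (y + 1) / y ^ 2 * ((s + 1) / (|s + 1| + y) - s / (|s| + y)) := by
  rcases le_or_gt 0 s with hs | hs
  · rw [abs_of_nonneg hs, abs_of_nonneg (by linarith)]
    have : (s + 1) / (s + 1 + y) - s / (s + y) = y / ((s + y) * (s + y + 1)) := by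
      field_simp; ring
    rw [this]
    exact one_div_sq_add_sq_le_of_nonneg hy hs
  rcases le_or_gt (s + 1) 0 with hs1 | hs1
  · rw [abs_of_neg hs, abs_of_nonpos hs1]
    have h1 : 0 < -(s + 1) + y := by linarith
    have h2 : 0 < -s + y := by linarith
    have : y / ((-s + y) * (-s + y + 1)) ≤ (s + 1) / (-(s + 1) + y) - s / (-s + y) := by
      rw [div_sub_div _ _ h1.ne' h2.ne', div_le_div_iff₀ (by positivity) (by positivity)]
      nlinarith [mul_pos h1 h2, mul_pos (mul_pos h1 h2) hy]
    calc 1 / (s ^ 2 + y ^ 2) = 1 / ((-s) ^ 2 + y ^ 2) := by ring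
      _ ≤ _ := one_div_sq_add_sq_le_of_nonneg hy (by linarith)
      _ ≤ _ := by gcongr
  · rw [abs_of_neg hs, abs_of_pos hs1]
    have h1 : 0 < s + 1 + y := by linarith
    have h2 : 0 < -s + y := by linarith
    have : 1 / (y + 1) ≤ (s + 1) / (s + 1 + y) - s / (-s + y) := by
      rw [div_sub_div _ _ h1.ne' h2.ne', div_le_div_iff₀ (by positivity) (by positivity)]
      nlinarith [mul_pos hs1 (neg_pos.2 hs), mul_pos (mul_pos hs1 (neg_pos.2 hs)) hy]
    calc 1 / (s ^ 2 + y ^ 2) ≤ 2 * (y + 1) / y ^ 2 * (1 / (y + 1)) := by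
          rw [div_mul_div_comm, mul_one, mul_div_mul_comm, div_self (by positivity), mul_one]
          gcongr
          · norm_num
          · nlinarith
      _ ≤ _ := by gcongr

theorem abs_div_abs_add_le_one {y : ℝ} (hy : 0 < y) (s : ℝ) : |s / (|s| + y)| ≤ 1 := by
  rw [abs_div, abs_of_pos (by positivity : 0 < |s| + y), div_le_one (by positivity)]
  linarith

theorem sum_range_one_div_sq_add_sq_le (a : ℝ) {y : ℝ} (hy : 0 < y) (m : ℕ) :
    ∑ n ∈ range m, 1 / ((n + a) ^ 2 + y ^ 2) ≤ 4 * (y + 1) / y ^ 2 := by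
  set g : ℕ → ℝ := fun k => (k + a) / (|k + a| + y)
  have hg : ∀ k, |g k| ≤ 1 := fun k => abs_div_abs_add_le_one hy _
  calc ∑ n ∈ range m, 1 / ((n + a) ^ 2 + y ^ 2)
      ≤ ∑ n ∈ range m, 2 * (y + 1) / y ^ 2 * (g (n + 1) - g n) := by
        gcongr with n
        have e : ((n + 1 : ℕ) : ℝ) + a = n + a + 1 := by push_cast; ring
        simp only [g, e]
        exact one_div_sq_add_sq_le_sub hy _
    _ = 2 * (y + 1) / y ^ 2 * (g m - g 0) := by rw [← mul_sum, sum_range_sub]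
    _ ≤ 2 * (y + 1) / y ^ 2 * 2 := by
        gcongr
        linarith [(abs_le.1 (hg m)).2, (abs_le.1 (hg 0)).1]
    _ = 4 * (y + 1) / y ^ 2 := by ring

theorem sum_range_one_div_succ_sq_le (m : ℕ) : ∑ n ∈ range m, 1 / ((n : ℝ) + 1) ^ 2 ≤ 2 := by
  set g : ℕ → ℝ := fun k => -2 / ((k : ℝ) + 1)
  calc ∑ n ∈ range m, 1 / ((n : ℝ) + 1) ^ 2 ≤ ∑ n ∈ range m, (g (n + 1) - g n) := by
        gcongr with n
        simp only [g]
        push_cast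
        rw [div_le_iff₀ (by positivity)]
        field_simp
        nlinarith
    _ = g m - g 0 := sum_range_sub g m
    _ ≤ 2 := by
        have : 0 ≤ 2 / ((m : ℝ) + 1) := by positivity
        simp only [g, neg_div, Nat.cast_zero, zero_add]
        linarith

theorem normSq_ofReal_sq_sub_sq (N : ℝ) (w : ℂ) :
    normSq ((N : ℂ) ^ 2 - w ^ 2) = ((N - w.re) ^ 2 + w.im ^ 2) * ((N + w.re) ^ 2 + w.im ^ 2) := by
  rw [show (N : ℂ) ^ 2 - w ^ 2 = (N - w) * (N + w) by ring, normSq_mul, normSq_apply,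
    normSq_apply]
  simp only [sub_re, add_re, sub_im, add_im, ofReal_re, ofReal_im]
  ring

theorem norm_ofReal_sq_sub_sq_le (N : ℝ) {w w' : ℂ} (hre : w.re = w'.re) (him : 0 ≤ w.im)
    (hle : w.im ≤ w'.im) : ‖(N : ℂ) ^ 2 - w ^ 2‖ ≤ ‖(N : ℂ) ^ 2 - w' ^ 2‖ := by
  refine (pow_le_pow_iff_left₀ (norm_nonneg _) (norm_nonneg _) two_ne_zero).1 ?_
  rw [Complex.sq_norm, Complex.sq_norm, normSq_ofReal_sq_sub_sq, normSq_ofReal_sq_sub_sq, hre]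
  have : w.im ^ 2 ≤ w'.im ^ 2 := by nlinarith
  gcongr

theorem add_sq_le_mul_exp {A y p : ℝ} (hA : 0 ≤ A) (hy : 0 < y) (hyp : y ≤ p) :
    A + (y + 1) ^ 2 ≤ (A + p ^ 2) * Real.exp (2 * (y + 1) / (A + y ^ 2)) := by
  have hAp : 0 < A + p ^ 2 := by nlinarith
  calc A + (y + 1) ^ 2 = (A + p ^ 2) * (1 + ((y + 1) ^ 2 - p ^ 2) / (A + p ^ 2)) := by
        field_simp; ring
    _ ≤ (A + p ^ 2) * Real.exp (((y + 1) ^ 2 - p ^ 2) / (A + p ^ 2)) := by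
        gcongr; linarith [Real.add_one_le_exp (((y + 1) ^ 2 - p ^ 2) / (A + p ^ 2))]
    _ ≤ (A + p ^ 2) * Real.exp (2 * (y + 1) / (A + y ^ 2)) := by
        gcongr
        nlinarith

noncomputable def pairFactor (N t : ℝ) (z : ℂ) : ℂ :=
  (1 - z / ((N : ℂ) - I * (t : ℂ))) * (1 + z / ((N : ℂ) + I * (t : ℂ)))

section PairFactor

variable {N t : ℝ} {z : ℂ}

theorem pairFactor_eq (hN : N ≠ 0) :
    pairFactor N t z = ((N : ℂ) ^ 2 - (z + I * t) ^ 2) / ((N ^ 2 + t ^ 2 : ℝ) : ℂ) := by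
  have h₁ : (N : ℂ) - I * t ≠ 0 := fun h => hN (by simpa using congrArg re h)
  have h₂ : (N : ℂ) + I * t ≠ 0 := fun h => hN (by simpa using congrArg re h)
  have hprod : ((N : ℂ) - I * t) * ((N : ℂ) + I * t) = ((N ^ 2 + t ^ 2 : ℝ) : ℂ) := by
    push_cast; ring_nf; rw [I_sq]; ring
  rw [pairFactor, ← hprod]
  field_simp
  ring

theorem norm_pairFactor_sub_one_le (hN : N ≠ 0) (ht : |t| ≤ 1) :
    ‖pairFactor N t z - 1‖ ≤ ‖z‖ * (‖z‖ + 2) / N ^ 2 := by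
  have hpos : 0 < N ^ 2 + t ^ 2 := by positivity
  have hsub : pairFactor N t z - 1 = -(z * (z + 2 * I * t)) / ((N ^ 2 + t ^ 2 : ℝ) : ℂ) := by
    rw [pairFactor_eq hN, div_sub_one (by exact_mod_cast hpos.ne')]
    push_cast; ring_nf; rw [I_sq]; ring
  have hnum : ‖z + 2 * I * t‖ ≤ ‖z‖ + 2 := by
    refine (norm_add_le _ _).trans ?_
    simpa [abs_le] using ht
  rw [hsub, norm_div, norm_neg, norm_mul, norm_real, Real.norm_of_nonneg hpos.le]
  calc ‖z‖ * ‖z + 2 * I * t‖ / (N ^ 2 + t ^ 2) ≤ ‖z‖ * (‖z‖ + 2) / (N ^ 2 + t ^ 2) := by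
        gcongr
    _ ≤ ‖z‖ * (‖z‖ + 2) / N ^ 2 := by
        gcongr
        nlinarith

theorem differentiable_pairFactor (N t : ℝ) : Differentiable ℂ (pairFactor N t) := by
  unfold pairFactor; fun_prop

theorem norm_ofReal_sq_sub_sq_le_mul_exp (ht₀ : 0 ≤ t) (hy : 0 < z.im) :
    ‖(N : ℂ) ^ 2 - (z + I) ^ 2‖ ≤ ‖(N : ℂ) ^ 2 - (z + I * t) ^ 2‖ *
      Real.exp ((z.im + 1) / ((N - z.re) ^ 2 + z.im ^ 2) +
        (z.im + 1) / ((N + z.re) ^ 2 + z.im ^ 2)) := by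
  refine (pow_le_pow_iff_left₀ (norm_nonneg _) (by positivity) two_ne_zero).1 ?_
  rw [mul_pow, Complex.sq_norm, Complex.sq_norm, normSq_ofReal_sq_sub_sq, normSq_ofReal_sq_sub_sq,
    ← Real.exp_nat_mul]
  simp only [add_re, add_im, mul_re, mul_im, I_re, I_im, ofReal_re, ofReal_im, mul_zero, zero_mul,
    sub_zero, add_zero, zero_add, one_mul]
  set x := z.re
  set y := z.im
  have h₁ := add_sq_le_mul_exp (sq_nonneg (N - x)) hy (p := y + t) (by linarith)
  have h₂ := add_sq_le_mul_exp (sq_nonneg (N + x)) hy (p := y + t) (by linarith)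
  calc ((N - x) ^ 2 + (y + 1) ^ 2) * ((N + x) ^ 2 + (y + 1) ^ 2)
      ≤ ((N - x) ^ 2 + (y + t) ^ 2) * Real.exp (2 * (y + 1) / ((N - x) ^ 2 + y ^ 2)) *
        (((N + x) ^ 2 + (y + t) ^ 2) * Real.exp (2 * (y + 1) / ((N + x) ^ 2 + y ^ 2))) :=
        mul_le_mul h₁ h₂ (by positivity) (by positivity)
    _ = _ := by
        rw [mul_mul_mul_comm, ← Real.exp_add]
        congr 2
        push_cast
        ring

theorem norm_one_sub_sq_div_sq (hN : N ≠ 0) (w : ℂ) :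
    ‖1 - w ^ 2 / (N : ℂ) ^ 2‖ = ‖(N : ℂ) ^ 2 - w ^ 2‖ / N ^ 2 := by
  have hN' : (N : ℂ) ≠ 0 := ofReal_ne_zero.2 hN
  have : 1 - w ^ 2 / (N : ℂ) ^ 2 = ((N : ℂ) ^ 2 - w ^ 2) / ((N ^ 2 : ℝ) : ℂ) := by
    push_cast; field_simp
  rw [this, norm_div, norm_real, Real.norm_of_nonneg (by positivity)]

theorem norm_pairFactor (hN : N ≠ 0) :
    ‖pairFactor N t z‖ = ‖(N : ℂ) ^ 2 - (z + I * t) ^ 2‖ / (N ^ 2 + t ^ 2) := by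
  rw [pairFactor_eq hN, norm_div, norm_real, Real.norm_of_nonneg (by positivity)]

theorem norm_pairFactor_le (hN : N ≠ 0) (ht₀ : 0 ≤ t) (ht₁ : t ≤ 1) (hy : 0 ≤ z.im) :
    ‖pairFactor N t z‖ ≤ ‖1 - (z + I) ^ 2 / (N : ℂ) ^ 2‖ := by
  rw [norm_pairFactor hN, norm_one_sub_sq_div_sq hN]
  refine div_le_div₀ (norm_nonneg _) (norm_ofReal_sq_sub_sq_le N ?_ ?_ ?_) (by positivity)
    (by nlinarith)
  · simp
  · simpa using add_nonneg hy ht₀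
  · simpa using ht₁

noncomputable def comparisonExponent (N : ℝ) (z : ℂ) : ℝ :=
  (z.im + 1) / ((N - z.re) ^ 2 + z.im ^ 2) + (z.im + 1) / ((N + z.re) ^ 2 + z.im ^ 2) + 1 / N ^ 2

theorem norm_one_sub_sq_div_sq_le (hN : N ≠ 0) (ht₀ : 0 ≤ t) (ht₁ : t ≤ 1) (hy : 0 < z.im) :
    ‖1 - (z + I) ^ 2 / (N : ℂ) ^ 2‖ ≤ ‖pairFactor N t z‖ * Real.exp (comparisonExponent N z) := by
  have hN2 : 0 < N ^ 2 := by positivity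
  have hden : N ^ 2 + t ^ 2 ≤ N ^ 2 * Real.exp (1 / N ^ 2) := by
    have hexp := Real.add_one_le_exp (1 / N ^ 2)
    have hmul : N ^ 2 * (1 / N ^ 2 + 1) = N ^ 2 + 1 := by field_simp; ring
    nlinarith
  have hratio : 1 ≤ N ^ 2 * Real.exp (1 / N ^ 2) / (N ^ 2 + t ^ 2) :=
    (one_le_div (by positivity)).2 hden
  rw [norm_pairFactor hN, norm_one_sub_sq_div_sq hN, comparisonExponent, Real.exp_add,
    div_le_iff₀ hN2]
  calc ‖(N : ℂ) ^ 2 - (z + I) ^ 2‖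
      ≤ ‖(N : ℂ) ^ 2 - (z + I * t) ^ 2‖ * Real.exp _ := norm_ofReal_sq_sub_sq_le_mul_exp ht₀ hy
    _ ≤ ‖(N : ℂ) ^ 2 - (z + I * t) ^ 2‖ * Real.exp _ *
        (N ^ 2 * Real.exp (1 / N ^ 2) / (N ^ 2 + t ^ 2)) :=
        le_mul_of_one_le_right (by positivity) hratio
    _ = _ := by ring

theorem sum_comparisonExponent_le {ε : ℝ} (hε : 0 < ε) (hz : ε ≤ z.im) (m : ℕ) :
    ∑ n ∈ range m, comparisonExponent (n + 1) z ≤ 8 * (1 + 1 / ε) ^ 2 + 2 := by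
  have hy : 0 < z.im := hε.trans_le hz
  have hshift : ∀ a : ℝ, ∑ n ∈ range m, (z.im + 1) / (((n : ℝ) + a) ^ 2 + z.im ^ 2) ≤
      4 * (1 + 1 / ε) ^ 2 := fun a => by
    calc ∑ n ∈ range m, (z.im + 1) / (((n : ℝ) + a) ^ 2 + z.im ^ 2)
        = (z.im + 1) * ∑ n ∈ range m, 1 / (((n : ℝ) + a) ^ 2 + z.im ^ 2) := by
          rw [mul_sum]; simp only [mul_one_div]
      _ ≤ (z.im + 1) * (4 * (z.im + 1) / z.im ^ 2) := by
          gcongr; exact sum_range_one_div_sq_add_sq_le a hy m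
      _ = 4 * (1 + 1 / z.im) ^ 2 := by field_simp
      _ ≤ 4 * (1 + 1 / ε) ^ 2 := by gcongr
  have e₁ := hshift (1 - z.re)
  have e₂ := hshift (1 + z.re)
  have e₃ := sum_range_one_div_succ_sq_le m
  simp only [comparisonExponent, sum_add_distrib, add_sub_assoc, add_assoc]
  linarith

end PairFactor

section PairProduct

variable {t : ℕ → ℝ}

theorem hasProdLocallyUniformlyOn_pairFactor (ht : ∀ n, |t n| ≤ 1) :
    HasProdLocallyUniformlyOn (fun n : ℕ => pairFactor ((n : ℝ) + 1) (t n))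
      (fun z => ∏' n : ℕ, pairFactor ((n : ℝ) + 1) (t n) z) Set.univ := by
  refine hasProdLocallyUniformlyOn_of_forall_compact isOpen_univ fun K _ hK => ?_
  obtain ⟨r, hr⟩ := hK.isBounded.exists_norm_le
  have hsum : Summable fun n : ℕ => r * (r + 2) / ((n : ℝ) + 1) ^ 2 := by
    have := (summable_nat_add_iff 1).2 (Real.summable_one_div_nat_pow.2 one_lt_two)
    simpa [div_eq_mul_one_div (r * (r + 2))] using this.mul_left (r * (r + 2))
  have := Summable.hasProdUniformlyOn_nat_one_add hK hsum
    (f := fun n z => pairFactor ((n : ℝ) + 1) (t n) z - 1) ?_ ?_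
  · simpa using this
  · refine Eventually.of_forall fun n z hz => ?_
    have hzr := hr z hz
    have hr0 : 0 ≤ r := (norm_nonneg z).trans hzr
    refine (norm_pairFactor_sub_one_le (by positivity) (ht n)).trans ?_
    gcongr
  · exact fun n => ((differentiable_pairFactor _ _).continuous.sub continuous_const).continuousOn

noncomputable def pairProduct (t : ℕ → ℝ) (z : ℂ) : ℂ :=
  (z + I) * ∏' n : ℕ, pairFactor ((n : ℝ) + 1) (t n) z

theorem tendstoLocallyUniformly_pairProduct (ht : ∀ n, |t n| ≤ 1) :
    TendstoLocallyUniformly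
      (fun m z => (z + I) * ∏ n ∈ range m, pairFactor ((n : ℝ) + 1) (t n) z)
      (pairProduct t) atTop := by
  have hprod := tendstoLocallyUniformlyOn_univ.1
    (hasProdLocallyUniformlyOn_pairFactor ht).tendstoLocallyUniformlyOn_finsetRange
  have hconst : TendstoLocallyUniformly (fun (_ : ℕ) (z : ℂ) => z + I) (fun z => z + I) atTop :=
    TendstoUniformly.tendstoLocallyUniformly fun _ hu =>
      Eventually.of_forall fun _ _ => refl_mem_uniformity hu
  refine hconst.fun_mul₀ hprod (by fun_prop) (hprod.continuous (Frequently.of_forall fun m => ?_))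
  exact continuous_finsetProd _ fun n _ => (differentiable_pairFactor _ _).continuous

theorem differentiable_pairProduct (ht : ∀ n, |t n| ≤ 1) : Differentiable ℂ (pairProduct t) := by
  rw [← differentiableOn_univ]
  refine (tendstoLocallyUniformlyOn_univ.2 (tendstoLocallyUniformly_pairProduct ht)).differentiableOn
    (Eventually.of_forall fun m => Differentiable.differentiableOn ?_) isOpen_univ
  exact (differentiable_id.add_const I).mul
    (Differentiable.fun_finsetProd fun n _ => differentiable_pairFactor _ _)

theorem tendsto_pairProduct (ht : ∀ n, |t n| ≤ 1) (z : ℂ) :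
    Tendsto (fun m => (z + I) * ∏ n ∈ range m, pairFactor ((n : ℝ) + 1) (t n) z) atTop
      (𝓝 (pairProduct t z)) :=
  (tendstoLocallyUniformlyOn_univ.2 (tendstoLocallyUniformly_pairProduct ht)).tendsto_at
    (Set.mem_univ z)

theorem norm_prod_pairFactor_le (ht : ∀ n, t n ∈ Set.Icc 0 1) {z : ℂ} (hy : 0 ≤ z.im) (m : ℕ) :
    ‖∏ n ∈ range m, pairFactor ((n : ℝ) + 1) (t n) z‖ ≤
      ‖∏ n ∈ range m, (1 - (z + I) ^ 2 / ((n : ℂ) + 1) ^ 2)‖ := by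
  rw [norm_prod, norm_prod]
  gcongr with n
  have := norm_pairFactor_le (Nat.cast_add_one_ne_zero n) (ht n).1 (ht n).2 hy
  rwa [ofReal_add, ofReal_natCast, ofReal_one] at this

theorem norm_prod_one_sub_sq_div_sq_le (ht : ∀ n, t n ∈ Set.Icc 0 1) {ε : ℝ} (hε : 0 < ε)
    {z : ℂ} (hz : ε ≤ z.im) (m : ℕ) :
    ‖∏ n ∈ range m, (1 - (z + I) ^ 2 / ((n : ℂ) + 1) ^ 2)‖ ≤
      ‖∏ n ∈ range m, pairFactor ((n : ℝ) + 1) (t n) z‖ * Real.exp (8 * (1 + 1 / ε) ^ 2 + 2) := by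
  calc ‖∏ n ∈ range m, (1 - (z + I) ^ 2 / ((n : ℂ) + 1) ^ 2)‖
      ≤ ∏ n ∈ range m, (‖pairFactor ((n : ℝ) + 1) (t n) z‖ *
          Real.exp (comparisonExponent ((n : ℝ) + 1) z)) := by
        rw [norm_prod]
        gcongr with n
        have := norm_one_sub_sq_div_sq_le (Nat.cast_add_one_ne_zero n) (ht n).1 (ht n).2
          (hε.trans_le hz)
        rwa [ofReal_add, ofReal_natCast, ofReal_one] at this
    _ ≤ _ := by
        rw [prod_mul_distrib, ← Real.exp_sum, ← norm_prod]
        gcongr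
        exact sum_comparisonExponent_le hε hz m

theorem pi_mul_norm_pairProduct_le (ht : ∀ n, t n ∈ Set.Icc 0 1) {z : ℂ} (hy : 0 ≤ z.im) :
    π * ‖pairProduct t z‖ ≤ ‖Complex.sin (π * (z + I))‖ := by
  have ht' : ∀ n, |t n| ≤ 1 := fun n => (abs_of_nonneg (ht n).1).trans_le (ht n).2
  refine le_of_tendsto_of_tendsto' (((tendsto_pairProduct ht' z).norm).const_mul _)
    (Complex.tendsto_euler_sin_prod (z + I)).norm fun m => ?_
  rw [norm_mul, norm_mul, norm_mul, norm_real, Real.norm_of_nonneg Real.pi_pos.le, mul_assoc]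
  gcongr
  exact norm_prod_pairFactor_le ht hy m

theorem norm_sin_le_pi_mul_norm_pairProduct (ht : ∀ n, t n ∈ Set.Icc 0 1) {ε : ℝ} (hε : 0 < ε)
    {z : ℂ} (hz : ε ≤ z.im) :
    ‖Complex.sin (π * (z + I))‖ ≤
      π * ‖pairProduct t z‖ * Real.exp (8 * (1 + 1 / ε) ^ 2 + 2) := by
  have ht' : ∀ n, |t n| ≤ 1 := fun n => (abs_of_nonneg (ht n).1).trans_le (ht n).2
  refine le_of_tendsto_of_tendsto' (Complex.tendsto_euler_sin_prod (z + I)).norm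
    ((((tendsto_pairProduct ht' z).norm).const_mul _).mul_const _) fun m => ?_
  rw [norm_mul, norm_mul, norm_mul, norm_real, Real.norm_of_nonneg Real.pi_pos.le, mul_assoc,
    mul_assoc, mul_assoc]
  gcongr
  exact norm_prod_one_sub_sq_div_sq_le ht hε hz m

theorem exists_norm_pairProduct_bounds (ht : ∀ n, t n ∈ Set.Icc 0 1) {ε : ℝ} (hε : 0 < ε) :
    ∃ c C : ℝ, 0 < c ∧ c ≤ C ∧ ∀ z : ℂ, ε ≤ z.im →
      c * Real.exp (π * z.im) ≤ ‖pairProduct t z‖ ∧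
      ‖pairProduct t z‖ ≤ C * Real.exp (π * z.im) := by
  set M := 8 * (1 + 1 / ε) ^ 2 + 2
  have hπ := Real.pi_pos
  have hsinhπ : 0 < Real.sinh π := Real.sinh_pos_iff.2 hπ
  refine ⟨Real.sinh π / π * Real.exp (-M), Real.cosh π / π, by positivity, ?_, fun z hz => ?_⟩
  · refine (mul_le_of_le_one_right (by positivity) (Real.exp_le_one_iff.2 ?_)).trans ?_
    · exact neg_nonpos.2 (by positivity)
    · gcongr
      exact (Real.sinh_lt_cosh _).le
  have hy : 0 ≤ π * z.im := mul_nonneg hπ.le (hε.le.trans hz)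
  have him : (π * (z + I)).im = π + π * z.im := by simp; ring
  constructor
  · have hsinh : Real.sinh π * Real.exp (π * z.im) ≤ ‖Complex.sin (π * (z + I))‖ :=
      (Real.sinh_mul_exp_le_sinh_add _ hy).trans (him ▸ Complex.sinh_im_le_norm_sin _)
    calc _ = Real.sinh π * Real.exp (π * z.im) / π * Real.exp (-M) := by ring
      _ ≤ π * ‖pairProduct t z‖ * Real.exp M / π * Real.exp (-M) := by
          gcongr ?_ / _ * _
          exact hsinh.trans (norm_sin_le_pi_mul_norm_pairProduct ht hε hz)
      _ = ‖pairProduct t z‖ := by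
          rw [Real.exp_neg]
          field_simp
  · have hcosh : ‖Complex.sin (π * (z + I))‖ ≤ Real.cosh π * Real.exp (π * z.im) :=
      (him ▸ Complex.norm_sin_le_cosh_im _).trans (Real.cosh_add_le_cosh_mul_exp _ hy)
    rw [div_mul_eq_mul_div, le_div_iff₀ hπ, mul_comm]
    exact (pi_mul_norm_pairProduct_le ht (hε.le.trans hz)).trans hcosh

end PairProduct

theorem stmt_15 (α : ℝ) (hα : α ∈ Set.Icc (0:ℝ) 2) :
    ∃ E : ℂ → ℂ,
      TendstoLocallyUniformly
        (fun (m : ℕ) (z : ℂ) => (z + Complex.I) *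
          ∏ n ∈ Finset.range m,
            ((1 - z / ((((n : ℝ) + 1 : ℝ) : ℂ) -
                Complex.I * ((((n : ℝ) + 1) ^ (-α) : ℝ) : ℂ))) *
             (1 + z / ((((n : ℝ) + 1 : ℝ) : ℂ) +
                Complex.I * ((((n : ℝ) + 1) ^ (-α) : ℝ) : ℂ)))))
        E atTop ∧
      Differentiable ℂ E ∧
      ∀ ε > (0:ℝ), ∃ c C : ℝ, 0 < c ∧ c ≤ C ∧ ∀ z : ℂ, ε ≤ z.im →
        c * Real.exp (Real.pi * z.im) ≤ ‖E z‖ ∧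
        ‖E z‖ ≤ C * Real.exp (Real.pi * z.im) := by
  set t : ℕ → ℝ := fun n => ((n : ℝ) + 1) ^ (-α)
  have ht : ∀ n, t n ∈ Set.Icc 0 1 := fun n =>
    ⟨by positivity, Real.rpow_le_one_of_one_le_of_nonpos (by simp) (by linarith [hα.1])⟩
  have ht' : ∀ n, |t n| ≤ 1 := fun n => (abs_of_nonneg (ht n).1).trans_le (ht n).2
  exact ⟨pairProduct t, tendstoLocallyUniformly_pairProduct ht', differentiable_pairProduct ht',
    fun ε hε => exists_norm_pairProduct_bounds ht hε⟩
end
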